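/- For every positive integer $n$, $\sum_{k=1}^{n} [2k][k]^{2} q^{2(n-k)} \binom{2n}{n+k}_q = [n]^2 \binom{2n}{n}_q$ as polynomials in $q$. -/

import Mathlib

/-!
The tail sums telescope: for `i + j + 1 = n`,
`∑_{k = i+1}^{n} [2k][k]² q^{2(n-k)} C(2n, n+k) = ([n]² + q^{j+2} [i]² [j]) C(2n, n+i)`,
by downward induction on `i`. The inductive step combines the absorption identity
`[k+1] C(N, k+1) = [N-k] C(N, k)` with an identity between `q`-integers, which becomes a
polynomial identity in powers of `q` after multiplying by `(q - 1)⁴`, since `(q - 1)[a] = q^a - 1`.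
At `i = 0` the correction term vanishes because `[0] = 0`.
-/

open Polynomial Finset

/-- The `q`-integer `[n] = 1 + q + ⋯ + q^(n-1)` as a polynomial in `ℤ[q]`. -/
noncomputable def qint (n : ℕ) : Polynomial ℤ := ∑ i ∈ Finset.range n, Polynomial.X ^ i

/-- The Gaussian binomial coefficient `[n choose k]_q` in `ℤ[q]`, via the `q`-Pascal rule. -/
noncomputable def qbinom : ℕ → ℕ → Polynomial ℤ
  | _, 0 => 1
  | 0, _ + 1 => 0
  | n + 1, k + 1 => qbinom n k + Polynomial.X ^ (k + 1) * qbinom n (k + 1)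

@[simp] lemma qint_zero : qint 0 = 0 := by simp [qint]

@[simp] lemma qint_one : qint 1 = 1 := by simp [qint]

lemma qint_add (a b : ℕ) : qint (a + b) = qint a + X ^ a * qint b := by
  simp [qint, sum_range_add, pow_add, mul_sum]

lemma X_sub_one_mul_qint (a : ℕ) : (X - 1) * qint a = X ^ a - 1 := by
  rw [qint, mul_comm, geom_sum_mul]

lemma qint_succ_ne_zero (a : ℕ) : qint (a + 1) ≠ 0 := by
  intro h
  rw [add_comm, qint_add] at h
  simpa using congrArg (eval 0) h

@[simp] lemma qbinom_zero_right (n : ℕ) : qbinom n 0 = 1 := by cases n <;> rfl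

lemma qbinom_succ_succ (n k : ℕ) :
    qbinom (n + 1) (k + 1) = qbinom n k + X ^ (k + 1) * qbinom n (k + 1) := rfl

lemma qbinom_eq_zero_of_lt {n k : ℕ} (h : n < k) : qbinom n k = 0 := by
  induction n generalizing k with
  | zero => obtain ⟨k, rfl⟩ := Nat.exists_eq_add_one.mpr h; rfl
  | succ n ih =>
    obtain ⟨k, rfl⟩ := Nat.exists_eq_add_one.mpr (Nat.zero_lt_of_lt h)
    rw [qbinom_succ_succ, ih (by omega), ih (by omega), mul_zero, add_zero]

@[simp] lemma qbinom_self (n : ℕ) : qbinom n n = 1 := by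
  induction n with
  | zero => rfl
  | succ n ih => rw [qbinom_succ_succ, ih, qbinom_eq_zero_of_lt n.lt_succ_self, mul_zero, add_zero]

lemma qbinom_one (n : ℕ) : qbinom n 1 = qint n := by
  induction n with
  | zero => rfl
  | succ n ih => rw [qbinom_succ_succ, qbinom_zero_right, ih, add_comm n, qint_add, qint_one, pow_one]

lemma qint_succ_mul_qbinom_succ (N k : ℕ) :
    qint (k + 1) * qbinom N (k + 1) = qint (N - k) * qbinom N k := by
  induction N generalizing k with
  | zero => cases k <;> simp [qbinom]
  | succ N ih =>
    cases k with
    | zero => simp [qbinom_one]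
    | succ k =>
      rcases lt_or_ge k N with hk | hk
      · have hsplit : ∀ a, a ≤ N → qint (a + 1) + X ^ (a + 1) * qint (N - a) = qint (N + 1) := by
          intro a ha
          rw [← qint_add]; congr 1; omega
        rw [qbinom_succ_succ, qbinom_succ_succ, show N + 1 - (k + 1) = N - k by omega]
        linear_combination X ^ (k + 2) * ih (k + 1) + ih k
          + (hsplit (k + 1) hk - hsplit k hk.le) * qbinom N (k + 1)
      · rw [qbinom_eq_zero_of_lt (by omega : N + 1 < k + 1 + 1), show N + 1 - (k + 1) = 0 by omega]
        simp

lemma qint_telescoping_identity (i j : ℕ) :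
    (qint (i + j + 2) ^ 2 + X ^ (j + 2) * qint (i + 1) ^ 2 * qint j
        + qint (2 * (i + 1)) * qint (i + 1) ^ 2 * X ^ (2 * (j + 1))) * qint (j + 2)
      = (qint (i + j + 2) ^ 2 + X ^ (j + 3) * qint i ^ 2 * qint (j + 1)) * qint (2 * i + j + 3) := by
  have hX : (X - 1 : ℤ[X]) ≠ 0 := X_sub_C_ne_zero 1
  apply mul_left_cancel₀ (pow_ne_zero 4 hX)
  calc (X - 1) ^ 4 * ((qint (i + j + 2) ^ 2 + X ^ (j + 2) * qint (i + 1) ^ 2 * qint j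
          + qint (2 * (i + 1)) * qint (i + 1) ^ 2 * X ^ (2 * (j + 1))) * qint (j + 2))
      = ((X - 1) * qint (i + j + 2)) ^ 2 * ((X - 1) * qint (j + 2)) * (X - 1)
          + X ^ (j + 2) * ((X - 1) * qint (i + 1)) ^ 2 * ((X - 1) * qint j)
            * ((X - 1) * qint (j + 2))
          + ((X - 1) * qint (2 * (i + 1))) * ((X - 1) * qint (i + 1)) ^ 2 * X ^ (2 * (j + 1))
            * ((X - 1) * qint (j + 2)) := by ring
    _ = ((X - 1) * qint (i + j + 2)) ^ 2 * ((X - 1) * qint (2 * i + j + 3)) * (X - 1)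
          + X ^ (j + 3) * ((X - 1) * qint i) ^ 2 * ((X - 1) * qint (j + 1))
            * ((X - 1) * qint (2 * i + j + 3)) := by
      simp only [X_sub_one_mul_qint]; ring
    _ = (X - 1) ^ 4 * ((qint (i + j + 2) ^ 2 + X ^ (j + 3) * qint i ^ 2 * qint (j + 1))
          * qint (2 * i + j + 3)) := by ring

noncomputable def summand (n k : ℕ) : ℤ[X] :=
  qint (2 * k) * qint k ^ 2 * X ^ (2 * (n - k)) * qbinom (2 * n) (n + k)

lemma sum_Icc_summand {i j n : ℕ} (h : i + j + 1 = n) :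
    ∑ k ∈ Icc (i + 1) n, summand n k
      = (qint n ^ 2 + X ^ (j + 2) * qint i ^ 2 * qint j) * qbinom (2 * n) (n + i) := by
  induction j generalizing i with
  | zero =>
    subst h
    have hlast := qint_succ_mul_qbinom_succ (2 * (i + 1)) (2 * i + 1)
    rw [show 2 * (i + 1) - (2 * i + 1) = 1 by omega, qint_one, one_mul,
      show 2 * i + 1 + 1 = 2 * (i + 1) by omega, qbinom_self] at hlast
    rw [Icc_self, sum_singleton, summand, Nat.sub_self, qint_zero, Nat.add_assoc,
      ← two_mul, qbinom_self, show i + 1 + i = 2 * i + 1 by omega, ← hlast]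
    ring
  | succ j ih =>
    have hIcc : Icc (i + 1) n = insert (i + 1) (Icc (i + 2) n) := by
      ext x; simp only [mem_Icc, mem_insert]; omega
    rw [hIcc, sum_insert (by simp), ih (by omega : i + 1 + j + 1 = n), summand]
    have hratio := qint_succ_mul_qbinom_succ (2 * n) (n + i)
    have hscalar := qint_telescoping_identity i j
    rw [show 2 * n - (n + i) = j + 2 by omega] at hratio
    rw [show i + j + 2 = n by omega, show 2 * i + j + 3 = n + i + 1 by omega] at hscalar
    rw [show n - (i + 1) = j + 1 by omega, ← add_assoc]
    apply mul_left_cancel₀ (qint_succ_ne_zero (j + 1))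
    linear_combination qbinom (2 * n) (n + i + 1) * hscalar
      + (qint n ^ 2 + X ^ (j + 3) * qint i ^ 2 * qint (j + 1)) * hratio

theorem stmt_3_general (n : ℕ) :
    ∑ k ∈ Finset.Icc 1 n,
        qint (2 * k) * (qint k) ^ 2 * Polynomial.X ^ (2 * (n - k)) * qbinom (2 * n) (n + k)
      = (qint n) ^ 2 * qbinom (2 * n) n := by
  rcases Nat.eq_zero_or_pos n with rfl | hn
  · simp
  · simpa [summand] using sum_Icc_summand (i := 0) (j := n - 1) (by omega)

theorem stmt_3 (n : ℕ) (hn : 0 < n) :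
    ∑ k ∈ Finset.Icc 1 n,
        qint (2 * k) * (qint k) ^ 2 * Polynomial.X ^ (2 * (n - k)) * qbinom (2 * n) (n + k)
      = (qint n) ^ 2 * qbinom (2 * n) n :=
  stmt_3_general n
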